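/- Let 0 < δ < q ≤ 1 and define P(k) = (q-δ)·(1-q)^(k-2)·δ·∑_{l=1}^{k-1}((1-δ)/(1-q))^(l-1) + δ·(1-q)^(k-1) for k ≥ 1 (with the convention that for k=1 the first sum is empty). Then ∑_{k=1}^∞ P(k) = 1 and ∑_{k=1}^∞ k·P(k) = 1/δ. -/

import Mathlib

/-!
Writing `r = (1 - δ) / (1 - q)`, we have `(q - δ) = (1 - q) (r - 1)`, so the geometric sum in
`P (k + 1)` telescopes and `P (k + 1) = δ (1 - δ) ^ k`: the inter-attempt time is geometric with
parameter `δ`, whose total mass is `1` and whose mean is `1 / δ`.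
-/

open Finset

theorem sub_mul_pow_pred_mul_geom_sum_div {K : Type*} [Field K] {b : K} (hb : b ≠ 0)
    (a : K) (k : ℕ) :
    (a - b) * b ^ (k - 1) * ∑ l ∈ range k, (a / b) ^ l = a ^ k - b ^ k := by
  cases k with
  | zero => simp
  | succ m =>
    rw [Nat.add_sub_cancel]
    calc (a - b) * b ^ m * ∑ l ∈ range (m + 1), (a / b) ^ l
        = b ^ (m + 1) * ((∑ l ∈ range (m + 1), (a / b) ^ l) * (a / b - 1)) := by
          field_simp; ring
      _ = a ^ (m + 1) - b ^ (m + 1) := by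
          rw [geom_sum_mul, div_pow]; field_simp

section GeometricDistribution

variable {𝕜 : Type*} [NormedField 𝕜] {p : 𝕜}

theorem hasSum_mul_one_sub_pow (hp : ‖1 - p‖ < 1) :
    HasSum (fun n : ℕ ↦ p * (1 - p) ^ n) 1 := by
  have hp0 : p ≠ 0 := by rintro rfl; simp at hp
  simpa [hp0] using (hasSum_geometric_of_norm_lt_one hp).mul_left p

theorem hasSum_succ_mul_mul_one_sub_pow (hp : ‖1 - p‖ < 1) :
    HasSum (fun n : ℕ ↦ ((n + 1 : ℕ) : 𝕜) * (p * (1 - p) ^ n)) (1 / p) := by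
  have hp0 : p ≠ 0 := by rintro rfl; simp at hp
  have h := (hasSum_choose_mul_geometric_of_norm_lt_one 1 hp).mul_left p
  rw [sub_sub_cancel, show p * (1 / p ^ (1 + 1)) = 1 / p by field_simp] at h
  simpa only [Nat.choose_one_right, mul_left_comm p] using h

end GeometricDistribution

/-- pmf of the inter-attempt time of the EH node in the regime `δ < q`:
`P(k) = (q-δ)(1-q)^(k-2) δ ∑_{l=1}^{k-1} ((1-δ)/(1-q))^(l-1) + δ (1-q)^(k-1)`.
It sums to `1` and has mean `1/δ`. -/
theorem eh_interattempt_mean (δ q : ℝ) (hδ : 0 < δ) (hδq : δ < q) (hq : q < 1)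
    (P : ℕ → ℝ)
    (hP : ∀ k : ℕ, P (k + 1) =
      (q - δ) * (1 - q) ^ (k - 1) * δ *
          (∑ l ∈ Finset.range k, ((1 - δ) / (1 - q)) ^ l) +
        δ * (1 - q) ^ k) :
    (∑' k : ℕ, P (k + 1)) = 1 ∧ (∑' k : ℕ, ((k + 1 : ℕ) : ℝ) * P (k + 1)) = 1 / δ := by
  have hP_geom : ∀ k : ℕ, P (k + 1) = δ * (1 - δ) ^ k := fun k ↦ by
    have h := sub_mul_pow_pred_mul_geom_sum_div (sub_ne_zero.mpr hq.ne') (1 - δ) k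
    rw [hP k]
    linear_combination δ * h
  have hδ_norm : ‖1 - δ‖ < 1 := by
    rw [Real.norm_eq_abs, abs_lt]
    constructor <;> linarith
  simp only [hP_geom]
  exact ⟨(hasSum_mul_one_sub_pow hδ_norm).tsum_eq,
    (hasSum_succ_mul_mul_one_sub_pow hδ_norm).tsum_eq⟩
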